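/- If the labelling function ℓ_r satisfies Assumptions 4 (labels determine R₁* correctly) and 5 (label comparisons do not conflict with R₂*), then label elicitation produces a sub-system of the decision maker's true preference system 𝒜* = [A, R₁*, R₂*]; in particular it produces a consistent preference system whenever 𝒜* is consistent. -/
import Mathlib


/-- The label set ℒ_r = {n, c, 0, 1, ..., r}. -/
inductive Label where
  | n : Label
  | c : Label
  | num : ℕ → Label
deriving DecidableEq

/-- Strictly greater comparison of numerical labels. -/
def labelGT : Label → Label → Prop
  | Label.num x, Label.num y => y < x
  | _, _ => False

variable {A : Type*}

/-- `u` weakly represents the preference system `[A, R1, R2]`. -/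
def Represents (R1 : A → A → Prop) (R2 : A × A → A × A → Prop) (u : A → ℝ) : Prop :=
  (∀ a, u a ∈ Set.Icc (0 : ℝ) 1) ∧
  (∀ a b, R1 a b → u b ≤ u a ∧ (u a = u b ↔ R1 b a)) ∧
  (∀ p q, R2 p q → u q.1 - u q.2 ≤ u p.1 - u p.2 ∧
    (u p.1 - u p.2 = u q.1 - u q.2 ↔ R2 q p))

theorem stmt9 (r : ℕ) (R1s : A → A → Prop) (R2s : A × A → A × A → Prop)
    (ℓ : A → A → Label) (B : Set (A × A))
    (hrange : ∀ a b k, ℓ a b = Label.num k → k ≤ r)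
    (hA4i : ∀ a b, (R1s a b ∧ R1s b a) ↔ ℓ a b = Label.num 0)
    (hA4ii : ∀ a b, (R1s a b ∧ ¬ R1s b a) ↔
      (((∃ k, 1 ≤ k ∧ k ≤ r ∧ ℓ a b = Label.num k) ∨ ℓ a b = Label.c) ∧ ℓ b a = Label.n))
    (hA4iii : ∀ a b, (¬ R1s a b ∧ ¬ R1s b a) ↔ (ℓ a b = Label.n ∧ ℓ b a = Label.n))
    (hA5i : ∀ a b d e, R1s a b → R1s d e → labelGT (ℓ a b) (ℓ d e) →
      R2s (a, b) (d, e) ∧ ¬ R2s (d, e) (a, b))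
    (hA5ii : ∀ a b d e, R1s a b → R1s d e → ℓ a b = Label.num 0 → ℓ d e = Label.num 0 →
      R2s (a, b) (d, e) ∧ R2s (d, e) (a, b))
    (hA5iii : ∀ a b d e, R1s a b → R1s d e →
      ((ℓ a b = Label.c ∨ ℓ d e = Label.c) ↔ (¬ R2s (a, b) (d, e) ∧ ¬ R2s (d, e) (a, b))))
    (R1e : A → A → Prop)
    (hR1e : ∀ a b, R1e a b ↔
      (((a, b) ∈ B ∧ ℓ a b ≠ Label.n) ∨ ((b, a) ∈ B ∧ ℓ b a = Label.num 0)))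
    (R2e : A × A → A × A → Prop)
    (hR2e : ∀ p q, R2e p q ↔ (R1e p.1 p.2 ∧ R1e q.1 q.2 ∧
      (labelGT (ℓ p.1 p.2) (ℓ q.1 q.2) ∨
        (ℓ p.1 p.2 = Label.num 0 ∧ ℓ q.1 q.2 = Label.num 0)))) :
    (∀ a b, R1e a b → R1s a b) ∧ (∀ p q, R2e p q → R2s p q) ∧
    ((∃ u, Represents R1s R2s u) → ∃ u, Represents R1e R2e u) := by

  have h1 : ∀ a b, R1e a b → R1s a b := by
    intro a b h
    rcases (hR1e a b).1 h with ⟨_, hn⟩ | ⟨_, h0⟩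
    · by_contra hab
      by_cases hba : R1s b a
      · exact hn ((hA4ii b a).1 ⟨hba, hab⟩).2
      · exact hn ((hA4iii a b).1 ⟨hab, hba⟩).1
    · exact ((hA4i b a).2 h0).2
  have h2 : ∀ p q, R2e p q → R2s p q := by
    intro p q h
    obtain ⟨hp, hq, hc⟩ := (hR2e p q).1 h
    have hps := h1 _ _ hp
    have hqs := h1 _ _ hq
    rcases hc with hgt | ⟨h0p, h0q⟩
    · have := (hA5i p.1 p.2 q.1 q.2 hps hqs hgt).1
      simpa using this
    · have := (hA5ii p.1 p.2 q.1 q.2 hps hqs h0p h0q).1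
      simpa using this
  refine ⟨h1, h2, ?_⟩
  rintro ⟨u, hu0, hu1, hu2⟩
  refine ⟨u, hu0, ?_, ?_⟩
  · intro a b hab
    have hs := h1 a b hab
    obtain ⟨hle, heq⟩ := hu1 a b hs
    refine ⟨hle, ?_, ?_⟩
    · intro he
      have hba := heq.1 he
      have l0 : ℓ a b = Label.num 0 := (hA4i a b).1 ⟨hs, hba⟩
      have l0' : ℓ b a = Label.num 0 := (hA4i b a).1 ⟨hba, hs⟩
      rcases (hR1e a b).1 hab with ⟨hB, _⟩ | ⟨hB, _⟩
      · exact (hR1e b a).2 (Or.inr ⟨hB, l0⟩)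
      · exact (hR1e b a).2 (Or.inl ⟨hB, by rw [l0']; simp⟩)
    · intro hba
      exact heq.2 (h1 b a hba)
  · intro p q hpq
    obtain ⟨hp, hq, hc⟩ := (hR2e p q).1 hpq
    have hps := h1 _ _ hp
    have hqs := h1 _ _ hq
    rcases hc with hgt | ⟨h0p, h0q⟩
    · obtain ⟨hPQ, hnQP⟩ := hA5i p.1 p.2 q.1 q.2 hps hqs hgt
      rw [Prod.mk.eta, Prod.mk.eta] at hPQ hnQP
      obtain ⟨hle, heq⟩ := hu2 p q hPQ
      exact ⟨hle, fun he => absurd (heq.1 he) hnQP,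
        fun hqp => absurd (h2 q p hqp) hnQP⟩
    · obtain ⟨hPQ, hQP⟩ := hA5ii p.1 p.2 q.1 q.2 hps hqs h0p h0q
      rw [Prod.mk.eta, Prod.mk.eta] at hPQ hQP
      obtain ⟨hle, heq⟩ := hu2 p q hPQ
      exact ⟨hle, fun _ => (hR2e q p).2 ⟨hq, hp, Or.inr ⟨h0q, h0p⟩⟩,
        fun _ => heq.2 hQP⟩
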